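/- arXiv:1003.4447 — 4 statements merged into one kernel-verified Lean document; each statement's English description precedes it below -/
import Mathlib

section
/- Let G be a finite simple graph and let π = (W_1, …, W_t) be a clique vertex-partition of G. Then the independence complex Ind(G^π) of the clique-whiskered graph G^π is vertex-decomposable. -/
/-- A finset of vertices is an independent set of the graph `G`. -/
def IsIndep {V : Type*} (G : SimpleGraph V) (s : Finset V) : Prop :=
  ∀ u ∈ s, ∀ v ∈ s, ¬ G.Adj u v

/-- A clique vertex-partition of `G`: a family of `t` pairwise disjoint (possibly empty)
cliques of `G` whose union is the whole vertex set. -/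
structure CliquePartition {V : Type*} (G : SimpleGraph V) (t : ℕ) where
  part : Fin t → Finset V
  disj : ∀ i j, i ≠ j → Disjoint (part i) (part j)
  cover : ∀ v, ∃ i, v ∈ part i
  clique : ∀ i, G.IsClique (part i : Set V)

/-- The clique-whiskered graph `G^π`: to each clique `W_i` of the partition a new vertex
`w_i` (encoded as `Sum.inr i`) is attached, joined to every vertex of `W_i`. -/
def whisker {V : Type*} {t : ℕ} (G : SimpleGraph V) (π : CliquePartition G t) :
    SimpleGraph (V ⊕ Fin t) :=
  SimpleGraph.fromRel fun a b =>
    match a, b with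
    | Sum.inl u, Sum.inl v => G.Adj u v
    | Sum.inl v, Sum.inr i => v ∈ π.part i
    | _, _ => False

/-- A simplicial complex (given by its membership predicate on finsets) is pure:
all maximal faces have the same cardinality. -/
def IsPureCpx {α : Type*} (Δ : Finset α → Prop) : Prop :=
  ∀ s t : Finset α, Δ s → Δ t →
    (∀ s', Δ s' → s ⊆ s' → s = s') → (∀ t', Δ t' → t ⊆ t' → t = t') → s.card = t.card

/-- Vertex-decomposability of a simplicial complex: either it is a simplex, or it has a
shedding vertex `v` such that both the link and the deletion of `v` are pure and
vertex-decomposable. -/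
inductive VertexDecomposable {α : Type*} [DecidableEq α] : (Finset α → Prop) → Prop
  | simplex {Δ : Finset α → Prop} (F : Finset α) (h : ∀ s, Δ s ↔ s ⊆ F) :
      VertexDecomposable Δ
  | shed {Δ : Finset α → Prop} (v : α) (hv : Δ {v})
      (hlinkPure : IsPureCpx (fun s => v ∉ s ∧ Δ (insert v s)))
      (hdelPure : IsPureCpx (fun s => v ∉ s ∧ Δ s))
      (hlink : VertexDecomposable (fun s => v ∉ s ∧ Δ (insert v s)))
      (hdel : VertexDecomposable (fun s => v ∉ s ∧ Δ s)) :
      VertexDecomposable Δ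

/-!
Group the vertices of `G^π` into the blocks `B_i = W_i ∪ {w_i}`: each block is a clique of `G^π`,
and all neighbours of the whisker `w_i` lie in `B_i`. Restrict `Ind(G^π)` to vertex sets `S` that
contain `w_i` whenever they meet `B_i`. A maximal independent subset of such an `S` then meets every
block that `S` meets exactly once, so the restricted complex is pure. Shedding an original vertex
`v ∈ S` leaves `S \ {v}` (deletion) and `S \ N[v]` (link), which are again of this kind; and once
`S` contains only whiskers it is independent, so the complex is a simplex.
-/

section IndepOn

variable {α : Type*} (H : SimpleGraph α)

def IndepOn (S s : Finset α) : Prop :=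
  s ⊆ S ∧ IsIndep H s

variable {H}

lemma isIndep_insert [DecidableEq α] {v : α} {s : Finset α} :
    IsIndep H (insert v s) ↔ IsIndep H s ∧ ∀ a ∈ s, ¬ H.Adj v a := by
  simp only [IsIndep, Finset.mem_insert, forall_eq_or_imp, H.irrefl, not_false_eq_true,
    true_and]
  constructor
  · rintro ⟨hv, hs⟩
    exact ⟨fun a ha => (hs a ha).2, hv⟩
  · rintro ⟨hs, hv⟩
    exact ⟨hv, fun a ha => ⟨fun h => hv a ha h.symm, hs a ha⟩⟩

lemma indepOn_singleton {S : Finset α} {v : α} (hv : v ∈ S) : IndepOn H S {v} :=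
  ⟨Finset.singleton_subset_iff.mpr hv, by simp [IsIndep]⟩

lemma indepOn_iff_subset_of_isIndep {S s : Finset α} (hS : IsIndep H S) :
    IndepOn H S s ↔ s ⊆ S :=
  ⟨And.left, fun hs => ⟨hs, fun a ha b hb => hS a (hs ha) b (hs hb)⟩⟩

lemma indepOn_eq_isIndep_of_forall_mem {S : Finset α} (hS : ∀ a, a ∈ S) :
    IndepOn H S = IsIndep H := by
  funext s
  simp [IndepOn, hS, Finset.subset_iff]

lemma link_indepOn [DecidableEq α] [DecidableRel H.Adj] {S : Finset α} {v : α} (hv : v ∈ S) :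
    (fun s => v ∉ s ∧ IndepOn H S (insert v s)) =
      IndepOn H (S.filter fun a => a ≠ v ∧ ¬ H.Adj v a) := by
  funext s
  simp only [IndepOn, Finset.insert_subset_iff, isIndep_insert, eq_iff_iff]
  simp only [Finset.subset_iff, Finset.mem_filter]
  constructor
  · rintro ⟨hvs, ⟨-, hsS⟩, hs, hvs'⟩
    exact ⟨fun a ha => ⟨hsS ha, fun h => hvs (h ▸ ha), hvs' a ha⟩, hs⟩
  · rintro ⟨hsS, hs⟩
    exact ⟨fun h => (hsS h).2.1 rfl, ⟨hv, fun a ha => (hsS ha).1⟩, hs,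
      fun a ha => (hsS ha).2.2⟩

lemma deletion_indepOn [DecidableEq α] {S : Finset α} {v : α} :
    (fun s => v ∉ s ∧ IndepOn H S s) = IndepOn H (S.erase v) := by
  funext s
  simp only [IndepOn, Finset.subset_erase, eq_iff_iff]
  tauto

end IndepOn

namespace CliquePartition

variable {V : Type*} {G : SimpleGraph V} {t : ℕ} (π : CliquePartition G t)

/-- The blocks `π.block ⁻¹' {i} = W_i ∪ {w_i}` partition the vertices of `G^π`. -/
noncomputable def block : V ⊕ Fin t → Fin t :=
  Sum.elim (fun v => (π.cover v).choose) id

lemma mem_part_block (v : V) : v ∈ π.part (π.block (.inl v)) :=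
  (π.cover v).choose_spec

@[simp]
lemma block_inr (i : Fin t) : π.block (.inr i) = i :=
  rfl

lemma block_inl_eq_of_mem {v : V} {i : Fin t} (hv : v ∈ π.part i) : π.block (.inl v) = i := by
  by_contra hne
  exact Finset.disjoint_left.mp (π.disj _ _ hne) (π.mem_part_block v) hv

def IsWhiskerClosed (S : Finset (V ⊕ Fin t)) : Prop :=
  ∀ a ∈ S, .inr (π.block a) ∈ S

end CliquePartition

section Whisker

variable {V : Type*} {G : SimpleGraph V} {t : ℕ} {π : CliquePartition G t}

@[simp]
lemma whisker_adj_inl_inl {u v : V} : (whisker G π).Adj (.inl u) (.inl v) ↔ G.Adj u v := by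
  simpa [whisker, G.adj_comm v u] using fun h : G.Adj u v => h.ne

@[simp]
lemma whisker_adj_inl_inr {v : V} {i : Fin t} :
    (whisker G π).Adj (.inl v) (.inr i) ↔ v ∈ π.part i := by
  simp [whisker]

@[simp]
lemma whisker_adj_inr_inl {v : V} {i : Fin t} :
    (whisker G π).Adj (.inr i) (.inl v) ↔ v ∈ π.part i := by
  simp [whisker]

@[simp]
lemma not_whisker_adj_inr_inr {i j : Fin t} : ¬ (whisker G π).Adj (.inr i) (.inr j) := by
  simp [whisker]

lemma whisker_adj_of_block_eq {a b : V ⊕ Fin t} (hab : π.block a = π.block b) (hne : a ≠ b) :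
    (whisker G π).Adj a b := by
  have hmem := π.mem_part_block
  rcases a with u | i <;> rcases b with v | j
  · have hv : v ∈ π.part (π.block (.inl u)) := hab ▸ hmem v
    simpa using π.clique _ (hmem u) hv (by simpa using hne)
  · rw [π.block_inr] at hab
    simpa [← hab] using hmem u
  · rw [π.block_inr] at hab
    simpa [hab] using hmem v
  · exact absurd (congrArg Sum.inr hab) hne

lemma block_eq_of_whisker_adj_inr {i : Fin t} {a : V ⊕ Fin t}
    (h : (whisker G π).Adj (.inr i) a) : π.block a = i := by
  rcases a with v | j
  · exact π.block_inl_eq_of_mem ((whisker_adj_inr_inl).mp h)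
  · exact absurd h (not_whisker_adj_inr_inr)

lemma CliquePartition.IsWhiskerClosed.link [DecidableEq V] [DecidableRel (whisker G π).Adj]
    {S : Finset (V ⊕ Fin t)} (hS : π.IsWhiskerClosed S) (x : V ⊕ Fin t) :
    π.IsWhiskerClosed (S.filter fun a => a ≠ x ∧ ¬ (whisker G π).Adj x a) := by
  intro a ha
  obtain ⟨haS, hax, hadj⟩ := Finset.mem_filter.mp ha
  have hblock : π.block x ≠ π.block a := fun h => hadj (whisker_adj_of_block_eq h hax.symm)
  refine Finset.mem_filter.mpr ⟨hS a haS, ?_, ?_⟩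
  · rintro rfl
    exact hblock (π.block_inr _)
  · exact fun h => hblock (block_eq_of_whisker_adj_inr h.symm)

lemma CliquePartition.IsWhiskerClosed.erase_inl [DecidableEq V] {S : Finset (V ⊕ Fin t)}
    (hS : π.IsWhiskerClosed S) (v : V) : π.IsWhiskerClosed (S.erase (.inl v)) :=
  fun a ha => Finset.mem_erase.mpr ⟨Sum.inr_ne_inl, hS a (Finset.mem_of_mem_erase ha)⟩

lemma injOn_block_of_isIndep {F : Finset (V ⊕ Fin t)} (hF : IsIndep (whisker G π) F) :
    Set.InjOn π.block F := fun a ha b hb hab => by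
  by_contra hne
  exact hF a ha b hb (whisker_adj_of_block_eq hab hne)

lemma isIndep_insert_inr [DecidableEq V] {F : Finset (V ⊕ Fin t)} {i : Fin t}
    (hF : IsIndep (whisker G π) F) (hi : ∀ a ∈ F, π.block a ≠ i) :
    IsIndep (whisker G π) (insert (.inr i) F) :=
  isIndep_insert.mpr ⟨hF, fun a ha h => hi a ha (block_eq_of_whisker_adj_inr h)⟩

lemma image_block_eq_of_maximal [DecidableEq V] {S F : Finset (V ⊕ Fin t)}
    (hS : π.IsWhiskerClosed S) (hF : IndepOn (whisker G π) S F)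
    (hmax : ∀ F', IndepOn (whisker G π) S F' → F ⊆ F' → F = F') :
    F.image π.block = S.image π.block := by
  refine (Finset.image_subset_image hF.1).antisymm fun i hi => ?_
  obtain ⟨a, haS, rfl⟩ := Finset.mem_image.mp hi
  by_contra hmiss
  have hblock : ∀ b ∈ F, π.block b ≠ π.block a := fun b hb h =>
    hmiss (Finset.mem_image.mpr ⟨b, hb, h⟩)
  have hins : IndepOn (whisker G π) S (insert (.inr (π.block a)) F) :=
    ⟨Finset.insert_subset (hS a haS) hF.1, isIndep_insert_inr hF.2 hblock⟩
  have hmem : Sum.inr (π.block a) ∈ F :=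
    (hmax _ hins (Finset.subset_insert _ _)) ▸ Finset.mem_insert_self _ _
  exact hblock _ hmem (π.block_inr _)

lemma isPureCpx_indepOn_whisker [DecidableEq V] {S : Finset (V ⊕ Fin t)}
    (hS : π.IsWhiskerClosed S) : IsPureCpx (IndepOn (whisker G π) S) := by
  have hcard : ∀ F, IndepOn (whisker G π) S F →
      (∀ F', IndepOn (whisker G π) S F' → F ⊆ F' → F = F') →
      F.card = (S.image π.block).card := fun F hF hmax => by
    rw [← image_block_eq_of_maximal hS hF hmax,
      Finset.card_image_of_injOn (injOn_block_of_isIndep hF.2)]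
  intro F F' hF hF' hmax hmax'
  rw [hcard F hF hmax, hcard F' hF' hmax']

end Whisker

theorem vertexDecomposable_indepOn_whisker {V : Type*} [DecidableEq V] {G : SimpleGraph V}
    {t : ℕ} (π : CliquePartition G t) (S : Finset (V ⊕ Fin t)) (hS : π.IsWhiskerClosed S) :
    VertexDecomposable (IndepOn (whisker G π) S) := by
  classical
  induction S using Finset.strongInduction with
  | H S ih =>
  by_cases hV : ∃ v, Sum.inl v ∈ S
  · obtain ⟨v, hv⟩ := hV
    have hlink := hS.link (.inl v)
    have hdel := hS.erase_inl v
    have hlink_lt : S.filter (fun a => a ≠ .inl v ∧ ¬ (whisker G π).Adj (.inl v) a) ⊂ S :=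
      Finset.filter_ssubset.mpr ⟨_, hv, fun h => h.1 rfl⟩
    refine .shed (.inl v) (indepOn_singleton hv) ?_ ?_ ?_ ?_
    · rw [link_indepOn hv]
      exact isPureCpx_indepOn_whisker hlink
    · rw [deletion_indepOn]
      exact isPureCpx_indepOn_whisker hdel
    · rw [link_indepOn hv]
      exact ih _ hlink_lt hlink
    · rw [deletion_indepOn]
      exact ih _ (Finset.erase_ssubset hv) hdel
  · rw [not_exists] at hV
    refine .simplex S fun s => indepOn_iff_subset_of_isIndep ?_
    rintro (u | i) hu (v | j) hv
    exacts [absurd hu (hV u), absurd hu (hV u), absurd hv (hV v), not_whisker_adj_inr_inr]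

theorem whisker_vertexDecomposable_general {V : Type*} [DecidableEq V]
    (G : SimpleGraph V) {t : ℕ} (π : CliquePartition G t) :
    VertexDecomposable (fun s : Finset (V ⊕ Fin t) => IsIndep (whisker G π) s) := by
  let S : Finset (V ⊕ Fin t) := (Finset.univ.biUnion π.part).disjSum Finset.univ
  have hS : ∀ a, a ∈ S := by
    rintro (v | i)
    · simpa [S] using π.cover v
    · simp [S]
  rw [← indepOn_eq_isIndep_of_forall_mem hS]
  exact vertexDecomposable_indepOn_whisker π S fun a _ => hS _

/-- The independence complex of a clique-whiskered graph is vertex-decomposable. -/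
theorem whisker_vertexDecomposable {V : Type*} [Fintype V] [DecidableEq V]
    (G : SimpleGraph V) {t : ℕ} (π : CliquePartition G t) :
    VertexDecomposable (fun s : Finset (V ⊕ Fin t) => IsIndep (whisker G π) s) :=
  whisker_vertexDecomposable_general G π
end

section
/- There is no finite simple graph G and integer d ≥ 2 such that, for every j ≥ 0, the number of independent sets of cardinality j in G equals C(d, j) + 3·C(d−1, j−1) + 3·C(d−2, j−2) (where C(a,b) = 0 if b < 0 or b > a). In other words, no flag complex has h-vector with nonzero part (1, 3, 3), even though (1, 3, 3) is the face vector of a simplicial complex (the boundary of a triangle). -/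
/-- The number of independent sets of cardinality `k` in `G`
(the face number `f_{k-1}` of the independence complex of `G`). -/
noncomputable def indepCount {V : Type*} (G : SimpleGraph V) (k : ℕ) : ℕ :=
  Set.ncard {s : Finset V | IsIndep G s ∧ s.card = k}

/-! The counts f₁ and f₂ force `G` to have `d + 3` vertices and exactly three edges. As no set of
`d + 1` or `d + 2` vertices is independent, every pair of vertices misses some edge, and with only
three edges this makes them pairwise disjoint. Each of the `2 · 2 · 2` transversals of the three
edges then meets every edge, so its complement is an independent `d`-set: `f_d ≥ 8`, whereas the
formula gives `f_d = 7`. -/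

open Finset

theorem pairwiseDisjoint_of_card_le_three_of_forall_avoid {α : Type*} {B : Finset (Finset α)}
    (hB : #B ≤ 3) (hne : ∀ e ∈ B, e.Nonempty) (havoid : ∀ a b, ∃ e ∈ B, a ∉ e ∧ b ∉ e) :
    (B : Set (Finset α)).PairwiseDisjoint id := by
  classical
  intro e₁ he₁ e₂ he₂ hne₁₂
  refine disjoint_left.2 fun a ha₁ ha₂ => ?_
  obtain ⟨g, hg, hag, -⟩ := havoid a a
  obtain ⟨u, hu⟩ := hne g hg
  obtain ⟨h, hh, hah, huh⟩ := havoid a u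
  have hB3 : B = {e₁, e₂, g} := by
    have hsub : {e₁, e₂, g} ⊆ B := by
      simp [insert_subset_iff, mem_coe.1 he₁, mem_coe.1 he₂, hg]
    refine (eq_of_subset_of_card_le hsub (hB.trans ?_)).symm
    rw [card_eq_three.2 ⟨e₁, e₂, g, hne₁₂, by grind, by grind, rfl⟩]
  rw [hB3] at hh
  grind

theorem injOn_insert_insert_singleton {α : Type*} [DecidableEq α] {f₁ f₂ f₃ : Finset α}
    (h₁₂ : Disjoint f₁ f₂) (h₁₃ : Disjoint f₁ f₃) (h₂₃ : Disjoint f₂ f₃) :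
    Set.InjOn (fun p : α × α × α => ({p.1, p.2.1, p.2.2} : Finset α)) ↑(f₁ ×ˢ f₂ ×ˢ f₃) := by
  rintro ⟨x, y, z⟩ hp ⟨x', y', z'⟩ hp' heq
  simp only [coe_product, Set.mem_prod, mem_coe] at hp hp'
  simp only [Finset.ext_iff, mem_insert, mem_singleton] at heq
  rw [disjoint_left] at h₁₂ h₁₃ h₂₃
  grind [heq x, heq y, heq z]

section
open scoped Classical
variable {V : Type*} [Fintype V] (G : SimpleGraph V)

theorem indepCount_eq_card_filter (k : ℕ) :
    indepCount G k = #{s : Finset V | IsIndep G s ∧ #s = k} := by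
  rw [indepCount, ← Set.ncard_coe_finset, coe_filter]
  simp

theorem card_filter_card_eq_choose (k : ℕ) :
    #{s : Finset V | #s = k} = (Fintype.card V).choose k := by
  rw [← card_univ, ← card_powersetCard, ← powerset_univ, powersetCard_eq_filter]

theorem indepCount_one : indepCount G 1 = Fintype.card V := by
  rw [indepCount_eq_card_filter, ← Nat.choose_one_right (Fintype.card V),
    ← card_filter_card_eq_choose]
  congr 1
  ext s
  simp only [mem_filter, mem_univ, true_and, and_iff_right_iff_imp, card_eq_one]
  rintro ⟨a, rfl⟩ u hu v hv
  rw [mem_singleton] at hu hv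
  subst hu hv
  exact G.irrefl

noncomputable def edgePairs : Finset (Finset V) := {s | #s = 2 ∧ ¬ IsIndep G s}

theorem pair_mem_edgePairs {u v : V} (h : G.Adj u v) : {u, v} ∈ edgePairs G := by
  simp only [edgePairs, mem_filter, mem_univ, true_and, card_pair h.ne]
  exact fun hs => hs u (by simp) v (by simp) h

theorem card_of_mem_edgePairs {e : Finset V} (he : e ∈ edgePairs G) : #e = 2 :=
  (mem_filter.1 he).2.1

theorem indepCount_two_add_card_edgePairs :
    indepCount G 2 + #(edgePairs G) = (Fintype.card V).choose 2 := by
  rw [indepCount_eq_card_filter, edgePairs, ← card_filter_card_eq_choose,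
    ← card_filter_add_card_filter_not (s := {s : Finset V | #s = 2}) (IsIndep G), filter_filter,
    filter_filter]
  simp only [and_comm]

theorem not_isIndep_of_indepCount_eq_zero {k : ℕ} (h : indepCount G k = 0) {s : Finset V}
    (hs : #s = k) : ¬ IsIndep G s := fun hind => by
  rw [indepCount_eq_card_filter, card_eq_zero, filter_eq_empty_iff] at h
  exact h (mem_univ s) ⟨hind, hs⟩

theorem isIndep_compl_of_forall_not_disjoint {T : Finset V}
    (h : ∀ e ∈ edgePairs G, ¬ Disjoint e T) : IsIndep G Tᶜ := by
  intro u hu v hv huv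
  rw [mem_compl] at hu hv
  exact h _ (pair_mem_edgePairs G huv) (by simp [hu, hv])

theorem exists_mem_edgePairs_avoid
    (h₁ : indepCount G (Fintype.card V - 1) = 0) (h₂ : indepCount G (Fintype.card V - 2) = 0)
    (a b : V) : ∃ e ∈ edgePairs G, a ∉ e ∧ b ∉ e := by
  have hcover : ¬ IsIndep G {a, b}ᶜ := by
    rcases card_pair_eq_one_or_two (a := a) (b := b) with h | h
    · exact not_isIndep_of_indepCount_eq_zero G h₁ (by rw [card_compl, h])
    · exact not_isIndep_of_indepCount_eq_zero G h₂ (by rw [card_compl, h])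
  simp only [IsIndep, not_forall, not_not] at hcover
  obtain ⟨u, hu, v, hv, huv⟩ := hcover
  refine ⟨{u, v}, pair_mem_edgePairs G huv, ?_, ?_⟩ <;> simp at hu hv ⊢ <;> tauto

theorem card_mul_card_mul_card_le_indepCount {f₁ f₂ f₃ : Finset V}
    (hE : edgePairs G ⊆ {f₁, f₂, f₃})
    (h₁₂ : Disjoint f₁ f₂) (h₁₃ : Disjoint f₁ f₃) (h₂₃ : Disjoint f₂ f₃) :
    #f₁ * #f₂ * #f₃ ≤ indepCount G (Fintype.card V - 3) := by
  rw [indepCount_eq_card_filter, mul_assoc, ← card_product, ← card_product]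
  refine card_le_card_of_injOn (fun p => {p.1, p.2.1, p.2.2}ᶜ) ?_
    (compl_injective.comp_injOn (injOn_insert_insert_singleton h₁₂ h₁₃ h₂₃))
  rintro ⟨x, y, z⟩ hp
  simp only [coe_product, Set.mem_prod, mem_coe] at hp
  obtain ⟨hx, hy, hz⟩ := hp
  have hT : #({x, y, z} : Finset V) = 3 := card_eq_three.2
    ⟨x, y, z, fun h => disjoint_left.1 h₁₂ hx (h ▸ hy), fun h => disjoint_left.1 h₁₃ hx (h ▸ hz),
      fun h => disjoint_left.1 h₂₃ hy (h ▸ hz), rfl⟩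
  refine mem_filter.2 ⟨mem_univ _, isIndep_compl_of_forall_not_disjoint G fun e he => ?_,
    by rw [card_compl, hT]⟩
  have he' := hE he
  simp only [mem_insert, mem_singleton] at he'
  rcases he' with rfl | rfl | rfl
  · exact not_disjoint_iff.2 ⟨x, hx, by simp⟩
  · exact not_disjoint_iff.2 ⟨y, hy, by simp⟩
  · exact not_disjoint_iff.2 ⟨z, hz, by simp⟩

end

/-- No flag complex has `h`-vector with nonzero part `(1, 3, 3)`: there is no graph `G` and
`d ≥ 2` such that for all `j` the number of independent sets of cardinality `j` in `G` is
`C(d,j) + 3·C(d-1,j-1) + 3·C(d-2,j-2)` (with `C(a,b) = 0` when `b < 0`). -/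
theorem no_flag_h_one_three_three :
    ¬ ∃ (V : Type) (_ : Fintype V) (G : SimpleGraph V) (d : ℕ), 2 ≤ d ∧
      ∀ j : ℕ, indepCount G j =
        d.choose j + (if 1 ≤ j then 3 * (d - 1).choose (j - 1) else 0)
          + (if 2 ≤ j then 3 * (d - 2).choose (j - 2) else 0) := by
  rintro ⟨V, _, G, d, hd, hf⟩
  classical
  have hn : Fintype.card V = d + 3 := by
    have h1 := hf 1
    simp [indepCount_one] at h1
    omega
  have hE : #(edgePairs G) = 3 := by
    have h2 := indepCount_two_add_card_edgePairs G
    rw [hf 2, hn] at h2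
    simp [Nat.choose_succ_succ] at h2
    omega
  have hzero : ∀ j, d < j → indepCount G j = 0 := fun j hj => by
    rw [hf j, Nat.choose_eq_zero_of_lt hj, if_pos (by omega), if_pos (by omega),
      Nat.choose_eq_zero_of_lt (by omega), Nat.choose_eq_zero_of_lt (by omega)]
  have havoid := exists_mem_edgePairs_avoid G (hzero _ (by omega)) (hzero _ (by omega))
  have hdisj := pairwiseDisjoint_of_card_le_three_of_forall_avoid hE.le
    (fun e he => card_pos.1 (by rw [card_of_mem_edgePairs G he]; omega)) havoid
  obtain ⟨f₁, f₂, f₃, h₁₂, h₁₃, h₂₃, hB⟩ := card_eq_three.1 hE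
  have hcard : ∀ f ∈ ({f₁, f₂, f₃} : Finset (Finset V)), #f = 2 := fun f hf =>
    card_of_mem_edgePairs G (hB ▸ hf)
  rw [hB] at hdisj
  have h8 := card_mul_card_mul_card_le_indepCount G hB.le (hdisj (by simp) (by simp) h₁₂)
    (hdisj (by simp) (by simp) h₁₃) (hdisj (by simp) (by simp) h₂₃)
  rw [hcard f₁ (by simp), hcard f₂ (by simp), hcard f₃ (by simp), hn, Nat.add_sub_cancel, hf d,
    Nat.choose_self, if_pos (by omega), if_pos hd, Nat.choose_self, Nat.choose_self] at h8
  omega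
end

section
/- Let G be a bipartite graph without isolated vertices. If some pure order of G has a cross, then G admits no pure order X = {x_1, …, x_n}, Y = {y_1, …, y_n} with the property that every edge x_i y_j of G satisfies i ≤ j. (By the Herzog–Hibi criterion, this says that a bipartite graph with a pure order having a cross has a non-Cohen-Macaulay independence complex.) -/
/-- A pure order of a bipartite graph `G` (without isolated vertices): enumerations
`x_1, …, x_n` and `y_1, …, y_n` of the two parts of a bipartition of the vertex set such
that every `x_i y_i` is an edge, and whenever `i, j, k` are distinct and `x_i y_j` and
`x_j y_k` are edges, so is `x_i y_k`. -/
structure PureOrder {V : Type*} (G : SimpleGraph V) (n : ℕ) where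
  x : Fin n → V
  y : Fin n → V
  inj : Function.Injective (Sum.elim x y)
  cover : ∀ v : V, (∃ i, v = x i) ∨ (∃ i, v = y i)
  xIndep : ∀ i j, ¬ G.Adj (x i) (x j)
  yIndep : ∀ i j, ¬ G.Adj (y i) (y j)
  matching : ∀ i, G.Adj (x i) (y i)
  pureCond : ∀ i j k, i ≠ j → j ≠ k → i ≠ k →
    G.Adj (x i) (y j) → G.Adj (x j) (y k) → G.Adj (x i) (y k)

/-- A pure order has a cross if `x_i y_j` and `x_j y_i` are both edges for some `i ≠ j`. -/
def PureOrder.HasCross {V : Type*} {G : SimpleGraph V} {n : ℕ} (P : PureOrder G n) : Prop :=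
  ∃ i j, i ≠ j ∧ G.Adj (P.x i) (P.y j) ∧ G.Adj (P.x j) (P.y i)


/-!
A perfect matching of `G` is encoded as the involution `μ` sending each vertex to its partner.
If every edge `x_i y_j` of a pure order `Q` has `i ≤ j`, then `μ (x_t) = y_{σ t}` for an
injective `σ` with `t ≤ σ t`, which forces `σ = id`: the matching `{x_t y_t}` is the only
perfect matching.
A cross `x_i y_j, x_j y_i` of a pure order `P` gives a second perfect matching of `G`, obtained
from `{x_a y_a}` by swapping the partners of `x_i` and `x_j`.
-/

open Function

theorem Function.Injective.eq_id_of_id_le {α : Type*} [Finite α] [PartialOrder α] {f : α → α}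
    (hf : Injective f) (h : id ≤ f) : f = id := by
  funext a
  obtain ⟨n, hn, hper⟩ := Function.mem_periodicPts.mp (hf.mem_periodicPts a)
  obtain ⟨k, rfl⟩ := Nat.exists_eq_add_one_of_ne_zero hn.ne'
  refine le_antisymm ?_ (h a)
  calc f a ≤ f^[k] (f a) := id_le_iterate_of_id_le h k (f a)
    _ = a := hper

def SimpleGraph.IsPerfectMatchingInvolution {V : Type*} (G : SimpleGraph V) (μ : V → V) : Prop :=
  Involutive μ ∧ ∀ v, G.Adj v (μ v)

namespace PureOrder

variable {V : Type*} {G : SimpleGraph V} {n m : ℕ}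

theorem x_injective (P : PureOrder G n) : Injective P.x := P.inj.comp Sum.inl_injective

theorem y_injective (P : PureOrder G n) : Injective P.y := P.inj.comp Sum.inr_injective

theorem exists_y_eq_of_adj_x (P : PureOrder G n) {t : Fin n} {v : V} (h : G.Adj (P.x t) v) :
    ∃ s, v = P.y s :=
  (P.cover v).resolve_left fun ⟨s, hs⟩ => P.xIndep t s (hs ▸ h)

noncomputable def equiv (P : PureOrder G n) : Fin n ⊕ Fin n ≃ V :=
  Equiv.ofBijective (Sum.elim P.x P.y) ⟨P.inj, fun v => (P.cover v).elim
    (fun ⟨i, hi⟩ => ⟨.inl i, hi.symm⟩) (fun ⟨i, hi⟩ => ⟨.inr i, hi.symm⟩)⟩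

def IsTriangular (Q : PureOrder G m) : Prop := ∀ i j, G.Adj (Q.x i) (Q.y j) → i ≤ j

theorem IsTriangular.apply_x_eq_y {Q : PureOrder G m} (hQ : Q.IsTriangular) {μ : V → V}
    (hμ : G.IsPerfectMatchingInvolution μ) (t : Fin m) : μ (Q.x t) = Q.y t := by
  choose σ hσ using fun t => Q.exists_y_eq_of_adj_x (hμ.2 (Q.x t))
  have hσ_inj : Injective σ := fun s t hst =>
    Q.x_injective (hμ.1.injective (by rw [hσ, hσ, hst]))
  have hσ_id : σ = id := hσ_inj.eq_id_of_id_le fun t => hQ t (σ t) (hσ t ▸ hμ.2 _)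
  rw [hσ, hσ_id, id]

theorem IsTriangular.eq_of_isPerfectMatchingInvolution {Q : PureOrder G m} (hQ : Q.IsTriangular)
    {μ ν : V → V} (hμ : G.IsPerfectMatchingInvolution μ)
    (hν : G.IsPerfectMatchingInvolution ν) :
    μ = ν := by
  funext v
  obtain ⟨t, rfl⟩ | ⟨t, rfl⟩ := Q.cover v
  · rw [hQ.apply_x_eq_y hμ, hQ.apply_x_eq_y hν]
  · calc μ (Q.y t) = μ (μ (Q.x t)) := by rw [hQ.apply_x_eq_y hμ]
      _ = ν (ν (Q.x t)) := by rw [hμ.1, hν.1]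
      _ = ν (Q.y t) := by rw [hQ.apply_x_eq_y hν]

noncomputable def perfectMatchingOfPerm (P : PureOrder G n) (π : Equiv.Perm (Fin n)) :
    Equiv.Perm V :=
  P.equiv.permCongr ((Equiv.sumCongr π π.symm).trans (Equiv.sumComm _ _))

theorem perfectMatchingOfPerm_apply_equiv (P : PureOrder G n) (π : Equiv.Perm (Fin n))
    (s : Fin n ⊕ Fin n) :
    P.perfectMatchingOfPerm π (P.equiv s) = P.equiv (Sum.map π π.symm s).swap := by
  simp [perfectMatchingOfPerm]

theorem perfectMatchingOfPerm_x (P : PureOrder G n) (π : Equiv.Perm (Fin n)) (a : Fin n) :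
    P.perfectMatchingOfPerm π (P.x a) = P.y (π a) :=
  P.perfectMatchingOfPerm_apply_equiv π (.inl a)

theorem perfectMatchingOfPerm_y (P : PureOrder G n) (π : Equiv.Perm (Fin n)) (b : Fin n) :
    P.perfectMatchingOfPerm π (P.y b) = P.x (π.symm b) :=
  P.perfectMatchingOfPerm_apply_equiv π (.inr b)

theorem isPerfectMatchingInvolution_perfectMatchingOfPerm (P : PureOrder G n)
    {π : Equiv.Perm (Fin n)} (hπ : ∀ a, G.Adj (P.x a) (P.y (π a))) :
    G.IsPerfectMatchingInvolution (P.perfectMatchingOfPerm π) := by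
  refine ⟨fun v => ?_, fun v => ?_⟩ <;> obtain ⟨a, rfl⟩ | ⟨b, rfl⟩ := P.cover v
  · rw [perfectMatchingOfPerm_x, perfectMatchingOfPerm_y, Equiv.symm_apply_apply]
  · rw [perfectMatchingOfPerm_y, perfectMatchingOfPerm_x, Equiv.apply_symm_apply]
  · exact P.perfectMatchingOfPerm_x π a ▸ hπ a
  · simpa [perfectMatchingOfPerm_y] using (hπ (π.symm b)).symm

end PureOrder

theorem no_CM_order_of_hasCross_general {V : Type*} (G : SimpleGraph V) {n : ℕ}
    (P : PureOrder G n) (hP : P.HasCross) :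
    ¬ ∃ (m : ℕ) (Q : PureOrder G m), ∀ i j, G.Adj (Q.x i) (Q.y j) → i ≤ j := by
  rintro ⟨m, Q, hQ : Q.IsTriangular⟩
  obtain ⟨i, j, hij, hij_adj, hji_adj⟩ := hP
  have h_id := P.isPerfectMatchingInvolution_perfectMatchingOfPerm (π := 1) P.matching
  have h_swap := P.isPerfectMatchingInvolution_perfectMatchingOfPerm (π := Equiv.swap i j)
    fun a => by
      rcases eq_or_ne a i with rfl | hai
      · simpa using hij_adj
      rcases eq_or_ne a j with rfl | haj
      · simpa using hji_adj
      simpa [Equiv.swap_apply_of_ne_of_ne hai haj] using P.matching a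
  have h_eq := congrFun (hQ.eq_of_isPerfectMatchingInvolution h_id h_swap) (P.x i)
  rw [P.perfectMatchingOfPerm_x, P.perfectMatchingOfPerm_x, Equiv.swap_apply_left] at h_eq
  exact hij (P.y_injective h_eq)

/-- A bipartite graph with a pure order that has a cross admits no pure order in which
every edge `x_i y_j` satisfies `i ≤ j` (by the Herzog–Hibi criterion, its independence
complex is not Cohen-Macaulay). -/
theorem no_CM_order_of_hasCross {V : Type*} [Fintype V] (G : SimpleGraph V) {n : ℕ}
    (P : PureOrder G n) (hP : P.HasCross) :
    ¬ ∃ (m : ℕ) (Q : PureOrder G m), ∀ i j, G.Adj (Q.x i) (Q.y j) → i ≤ j :=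
  no_CM_order_of_hasCross_general G P hP
end

section
/- Let G be a bipartite graph without isolated vertices admitting a pure order X = {x_1, …, x_n}, Y = {y_1, …, y_n} that has a cross x_a y_b, x_b y_a (a ≠ b), and suppose G is not a complete bipartite graph K_{n,n}. Then there exists a vertex v of G, distinct from and non-adjacent to each of x_a, x_b, y_a, y_b, such that the induced subgraph of G on the vertices outside {v} ∪ N_G(v) still contains the cross edges x_a y_b and x_b y_a. (This is the key step showing that such a graph has a vertex link with non-Cohen-Macaulay independence complex, hence that its independence complex is not Buchsbaum.) -/
/-!
The vertex `v` can be taken among the `x_i` (resp. `y_j`) with `i ∉ {a, b}` that miss both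
`y_a` and `y_b` (resp. both `x_a` and `x_b`): bipartiteness makes such a vertex non-adjacent to
the whole cross. If there is no such vertex, the pure-order condition applied through the cross
shows that every `x_i` sees `y_a` and every `y_j` sees `x_a`, and applied once more through `a`
it shows that `G` is the complete bipartite graph.
-/

namespace PureOrder

variable {V : Type*} {G : SimpleGraph V} {n : ℕ} (P : PureOrder G n)

theorem x_injective_s11 : Function.Injective P.x :=
  fun _ _ h => Sum.inl_injective (P.inj h)

theorem y_injective_s11 : Function.Injective P.y :=
  fun _ _ h => Sum.inr_injective (P.inj h)

theorem x_ne_y (i j : Fin n) : P.x i ≠ P.y j :=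
  fun h => Sum.inl_ne_inr (P.inj (a₁ := .inl i) (a₂ := .inr j) h)

theorem adj_of_forall_adj_y_of_forall_adj_x (a : Fin n) (hx : ∀ i, G.Adj (P.x i) (P.y a))
    (hy : ∀ j, G.Adj (P.x a) (P.y j)) (i j : Fin n) : G.Adj (P.x i) (P.y j) := by
  rcases eq_or_ne i j with rfl | hij
  · exact P.matching i
  rcases eq_or_ne i a with rfl | hia
  · exact hy j
  rcases eq_or_ne j a with rfl | hja
  · exact hx i
  exact P.pureCond i a j hia hja.symm hij (hx i) (hy j)

variable {a b : Fin n} (hab : a ≠ b)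
  (h1 : G.Adj (P.x a) (P.y b)) (h2 : G.Adj (P.x b) (P.y a))
include hab h1 h2

theorem adj_y_both_of_adj_y_either {i : Fin n} (hia : i ≠ a) (hib : i ≠ b)
    (h : G.Adj (P.x i) (P.y a) ∨ G.Adj (P.x i) (P.y b)) :
    G.Adj (P.x i) (P.y a) ∧ G.Adj (P.x i) (P.y b) := by
  rcases h with ha | hb
  · exact ⟨ha, P.pureCond i a b hia hab hib ha h1⟩
  · exact ⟨P.pureCond i b a hib hab.symm hia hb h2, hb⟩

theorem adj_x_both_of_adj_x_either {j : Fin n} (hja : j ≠ a) (hjb : j ≠ b)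
    (h : G.Adj (P.x a) (P.y j) ∨ G.Adj (P.x b) (P.y j)) :
    G.Adj (P.x a) (P.y j) ∧ G.Adj (P.x b) (P.y j) := by
  rcases h with ha | hb
  · exact ⟨ha, P.pureCond b a j hab.symm hja.symm hjb.symm h2 ha⟩
  · exact ⟨P.pureCond a b j hab hjb.symm hja.symm h1 hb, hb⟩

theorem exists_x_or_y_not_adj_cross (hncomplete : ¬ ∀ i j, G.Adj (P.x i) (P.y j)) :
    (∃ i, i ≠ a ∧ i ≠ b ∧ ¬ G.Adj (P.x i) (P.y a) ∧ ¬ G.Adj (P.x i) (P.y b)) ∨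
      ∃ j, j ≠ a ∧ j ≠ b ∧ ¬ G.Adj (P.x a) (P.y j) ∧ ¬ G.Adj (P.x b) (P.y j) := by
  by_contra! h
  obtain ⟨hX, hY⟩ := h
  refine hncomplete (P.adj_of_forall_adj_y_of_forall_adj_x a (fun i => ?_) (fun j => ?_))
  · rcases eq_or_ne i a with rfl | hia
    · exact P.matching i
    rcases eq_or_ne i b with rfl | hib
    · exact h2
    exact (P.adj_y_both_of_adj_y_either hab h1 h2 hia hib
      (or_iff_not_imp_left.2 (hX i hia hib))).1
  · rcases eq_or_ne j a with rfl | hja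
    · exact P.matching j
    rcases eq_or_ne j b with rfl | hjb
    · exact h1
    exact (P.adj_x_both_of_adj_x_either hab h1 h2 hja hjb
      (or_iff_not_imp_left.2 (hY j hja hjb))).1

theorem exists_vertex_ne_not_adj_cross (hncomplete : ¬ ∀ i j, G.Adj (P.x i) (P.y j)) :
    ∃ v : V,
      (v ≠ P.x a ∧ v ≠ P.x b ∧ v ≠ P.y a ∧ v ≠ P.y b) ∧
      (¬ G.Adj v (P.x a) ∧ ¬ G.Adj v (P.x b) ∧ ¬ G.Adj v (P.y a) ∧ ¬ G.Adj v (P.y b)) := by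
  rcases P.exists_x_or_y_not_adj_cross hab h1 h2 hncomplete with
    ⟨i, hia, hib, hna, hnb⟩ | ⟨j, hja, hjb, hna, hnb⟩
  · exact ⟨P.x i, ⟨P.x_injective_s11.ne hia, P.x_injective_s11.ne hib, P.x_ne_y i a, P.x_ne_y i b⟩,
      ⟨P.xIndep i a, P.xIndep i b, hna, hnb⟩⟩
  · exact ⟨P.y j, ⟨(P.x_ne_y a j).symm, (P.x_ne_y b j).symm, P.y_injective_s11.ne hja,
      P.y_injective_s11.ne hjb⟩, ⟨fun h => hna h.symm, fun h => hnb h.symm, P.yIndep j a,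
      P.yIndep j b⟩⟩

end PureOrder

theorem exists_vertex_outside_cross_general {V : Type*} (G : SimpleGraph V) {n : ℕ}
    (P : PureOrder G n) (a b : Fin n) (hab : a ≠ b)
    (h1 : G.Adj (P.x a) (P.y b)) (h2 : G.Adj (P.x b) (P.y a))
    (hncomplete : ¬ ∀ i j, G.Adj (P.x i) (P.y j)) :
    ∃ v : V,
      (v ≠ P.x a ∧ v ≠ P.x b ∧ v ≠ P.y a ∧ v ≠ P.y b) ∧
      (¬ G.Adj v (P.x a) ∧ ¬ G.Adj v (P.x b) ∧ ¬ G.Adj v (P.y a) ∧ ¬ G.Adj v (P.y b)) ∧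
      ∃ (hxa : P.x a ∈ {u : V | u ≠ v ∧ ¬ G.Adj v u})
        (hxb : P.x b ∈ {u : V | u ≠ v ∧ ¬ G.Adj v u})
        (hya : P.y a ∈ {u : V | u ≠ v ∧ ¬ G.Adj v u})
        (hyb : P.y b ∈ {u : V | u ≠ v ∧ ¬ G.Adj v u}),
        (G.induce {u : V | u ≠ v ∧ ¬ G.Adj v u}).Adj ⟨P.x a, hxa⟩ ⟨P.y b, hyb⟩ ∧
        (G.induce {u : V | u ≠ v ∧ ¬ G.Adj v u}).Adj ⟨P.x b, hxb⟩ ⟨P.y a, hya⟩ := by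
  obtain ⟨v, hne, hnadj⟩ := P.exists_vertex_ne_not_adj_cross hab h1 h2 hncomplete
  exact ⟨v, hne, hnadj, ⟨hne.1.symm, hnadj.1⟩, ⟨hne.2.1.symm, hnadj.2.1⟩,
    ⟨hne.2.2.1.symm, hnadj.2.2.1⟩, ⟨hne.2.2.2.symm, hnadj.2.2.2⟩, h1, h2⟩

/-- If a pure order of a bipartite graph `G` has a cross `x_a y_b`, `x_b y_a` (`a ≠ b`) and
`G` is not the complete bipartite graph `K_{n,n}`, then there exists a vertex `v`, distinct
from and non-adjacent to each of `x_a, x_b, y_a, y_b`, such that the induced subgraph of `G`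
on the vertices outside `{v} ∪ N_G(v)` still contains the two cross edges. -/
theorem exists_vertex_outside_cross {V : Type*} [Fintype V] (G : SimpleGraph V) {n : ℕ}
    (P : PureOrder G n) (a b : Fin n) (hab : a ≠ b)
    (h1 : G.Adj (P.x a) (P.y b)) (h2 : G.Adj (P.x b) (P.y a))
    (hncomplete : ¬ ∀ i j, G.Adj (P.x i) (P.y j)) :
    ∃ v : V,
      (v ≠ P.x a ∧ v ≠ P.x b ∧ v ≠ P.y a ∧ v ≠ P.y b) ∧
      (¬ G.Adj v (P.x a) ∧ ¬ G.Adj v (P.x b) ∧ ¬ G.Adj v (P.y a) ∧ ¬ G.Adj v (P.y b)) ∧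
      ∃ (hxa : P.x a ∈ {u : V | u ≠ v ∧ ¬ G.Adj v u})
        (hxb : P.x b ∈ {u : V | u ≠ v ∧ ¬ G.Adj v u})
        (hya : P.y a ∈ {u : V | u ≠ v ∧ ¬ G.Adj v u})
        (hyb : P.y b ∈ {u : V | u ≠ v ∧ ¬ G.Adj v u}),
        (G.induce {u : V | u ≠ v ∧ ¬ G.Adj v u}).Adj ⟨P.x a, hxa⟩ ⟨P.y b, hyb⟩ ∧
        (G.induce {u : V | u ≠ v ∧ ¬ G.Adj v u}).Adj ⟨P.x b, hxb⟩ ⟨P.y a, hya⟩ :=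
  exists_vertex_outside_cross_general G P a b hab h1 h2 hncomplete
end
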